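/- Let (K,v) be a henselian valued field, θ ∈ K^s separable with complete Okutsu sequence [α₀,…,α_r], and β ∈ K^s with deg_K(β) = m_i and v(θ − β) > δ_{i−1}. Then for every g ∈ K[x] with 0 < deg(g) < m_i and every root ξ of g, one has v(β − ξ) = v(θ − ξ) ≤ δ_{i−1}. -/

import Mathlib

open Polynomial

noncomputable section

variable {K L Γ : Type*} [Field K] [Field L] [Algebra K L] [IsAlgClosure K L]
  [AddCommGroup Γ] [LinearOrder Γ] [IsOrderedAddMonoid Γ]

/-- The degree of an algebraic element over `K`: the degree of its minimal polynomial. -/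
def degK (K : Type*) [Field K] {L : Type*} [Field L] [Algebra K L] (β : L) : ℕ :=
  (minpoly K β).natDegree

/-- The ring of integers of an additive valuation on a field, as a valuation subring.
A valued field `(K,v)` is henselian iff this local ring is henselian. -/
def AddValuation.integersVSR {Γ : Type*} [AddCommGroup Γ] [LinearOrder Γ] [IsOrderedAddMonoid Γ] {F : Type*} [Field F]
    (v : AddValuation F (WithTop Γ)) : ValuationSubring F where
  carrier := {x | 0 ≤ v x}
  mul_mem' := by
    intro a b ha hb
    show (0 : WithTop Γ) ≤ v (a * b)
    rw [v.map_mul]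
    calc (0 : WithTop Γ) = 0 + 0 := by simp
    _ ≤ v a + v b := add_le_add ha hb
  one_mem' := by simp [Set.mem_setOf_eq, v.map_one]
  add_mem' := by
    intro a b ha hb
    exact le_trans (le_min ha hb) (v.map_add a b)
  zero_mem' := by simp [Set.mem_setOf_eq, v.map_zero]
  neg_mem' := by
    intro a ha
    simpa [Set.mem_setOf_eq, v.map_neg] using ha
  mem_or_inv_mem' := by
    intro x
    rcases le_total 0 (v x) with h | h
    · exact Or.inl h
    · right
      show (0 : WithTop Γ) ≤ v x⁻¹
      rcases eq_or_ne x 0 with rfl | hx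
      · simp [v.map_zero]
      · by_contra h'
        push_neg at h'
        have h1 : v (x * x⁻¹) = v x + v x⁻¹ := v.map_mul x x⁻¹
        rw [mul_inv_cancel₀ hx, v.map_one] at h1
        have h2 : v x + v x⁻¹ ≤ 0 + v x⁻¹ := add_le_add h le_rfl
        rw [zero_add] at h2
        exact absurd (h1 ▸ h2) (not_le.mpr h')

/-- `[α 0, …, α r]` is a *complete Okutsu sequence* for `θ = α (r+1)`. -/
def IsCompleteOkutsuSeq (K : Type*) [Field K] {L Γ : Type*} [Field L] [Algebra K L]
    [AddCommGroup Γ] [LinearOrder Γ] [IsOrderedAddMonoid Γ] (w : AddValuation L (WithTop Γ))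
    (r : ℕ) (α : ℕ → L) (θ : L) : Prop :=
  α (r + 1) = θ ∧ degK K (α 0) = 1 ∧
  (∀ i ≤ r, degK K (α i) < degK K (α (i + 1))) ∧
  ∀ i ≤ r, ∀ β : L,
    (degK K β < degK K (α (i + 1)) → w (θ - β) ≤ w (θ - α i)) ∧
    (degK K β < degK K (α i) → w (θ - β) < w (θ - α i))

theorem AddValuation.map_sub_eq_of_lt_map_sub {R Γ₀ : Type*} [Ring R]
    [LinearOrderedAddCommMonoidWithTop Γ₀] (v : AddValuation R Γ₀) {x y z : R}
    (h : v (x - z) < v (x - y)) : v (y - z) = v (x - z) := by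
  have hyx : v (x - z) < v (y - x) := v.map_sub_swap x y ▸ h
  rw [← sub_add_sub_cancel y x z, v.map_add_eq_of_lt_right hyx]

omit [IsAlgClosure K L] in
theorem degK_le_natDegree_of_mem_aroots {g : K[X]} {ξ : L} (hξ : ξ ∈ g.aroots L) :
    degK K ξ ≤ g.natDegree := by
  obtain ⟨hg, hroot⟩ := mem_aroots.mp hξ
  exact natDegree_le_of_dvd (minpoly.dvd K ξ hroot) hg

omit [IsAlgClosure K L] in
theorem IsCompleteOkutsuSeq.map_sub_le_of_degK_lt {w : AddValuation L (WithTop Γ)} {r : ℕ}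
    {α : ℕ → L} {θ : L} (hOk : IsCompleteOkutsuSeq K w r α θ) {i : ℕ} (hi : i ≤ r) {ξ : L}
    (hξ : degK K ξ < degK K (α (i + 1))) : w (θ - ξ) ≤ w (θ - α i) :=
  (hOk.2.2.2 i hi ξ).1 hξ

theorem small_degree_value_transfer_general (w : AddValuation L (WithTop Γ))
    (r : ℕ) (α : ℕ → L) (θ : L)
    (hOk : IsCompleteOkutsuSeq K w r α θ)
    (i : ℕ) (hi1 : 1 ≤ i) (hir : i ≤ r + 1)
    (β : L)
    (hβv : w (θ - α (i - 1)) < w (θ - β))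
    (g : Polynomial K) (hgdeg : g.natDegree < degK K (α i)) :
    ∀ ξ ∈ g.aroots L, w (β - ξ) = w (θ - ξ) ∧ w (θ - ξ) ≤ w (θ - α (i - 1)) := by
  intro ξ hξ
  obtain ⟨j, rfl⟩ : ∃ j, i = j + 1 := ⟨i - 1, by omega⟩
  rw [Nat.add_sub_cancel] at hβv ⊢
  have hξθ : w (θ - ξ) ≤ w (θ - α j) :=
    hOk.map_sub_le_of_degK_lt (by omega) ((degK_le_natDegree_of_mem_aroots hξ).trans_lt hgdeg)
  exact ⟨w.map_sub_eq_of_lt_map_sub (hξθ.trans_lt hβv), hξθ⟩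

/-- values at roots of small-degree polynomials transfer from `θ` to `β`. -/
theorem small_degree_value_transfer (w : AddValuation L (WithTop Γ))
    [HenselianLocalRing (AddValuation.integersVSR (w.comap (algebraMap K L)))]
    (r : ℕ) (α : ℕ → L) (θ : L)
    (hOk : IsCompleteOkutsuSeq K w r α θ) (hθs : (minpoly K θ).Separable)
    (i : ℕ) (hi1 : 1 ≤ i) (hir : i ≤ r + 1)
    (β : L) (hβs : (minpoly K β).Separable)
    (hβdeg : degK K β = degK K (α i)) (hβv : w (θ - α (i - 1)) < w (θ - β))
    (g : Polynomial K) (hg0 : 0 < g.natDegree) (hgdeg : g.natDegree < degK K (α i)) :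
    ∀ ξ ∈ g.aroots L, w (β - ξ) = w (θ - ξ) ∧ w (θ - ξ) ≤ w (θ - α (i - 1)) :=
  small_degree_value_transfer_general w r α θ hOk i hi1 hir β hβv g hgdeg
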